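/- The unibike error of the polar square root spiral satisfies E₁(t) ≤ R₀(t) − R₁(α(t)) for all t ≥ 2π, where R₀(t) is the distance of the front-track point from the origin, α(t) = t + 2π + β(t), and R₁(s) = √(s/(2π)). -/

import Mathlib

open Real

/-- The polar square root spiral `F₁(t) = √(t/(2π))(cos t, sin t)`. -/
noncomputable def F1 (t : ℝ) : EuclideanSpace ℝ (Fin 2) :=
  !₂[Real.sqrt (t / (2 * π)) * Real.cos t, Real.sqrt (t / (2 * π)) * Real.sin t]

/-- The front track `F₀(t) = F₁(t) + F₁'(t)/‖F₁'(t)‖`. -/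
noncomputable def F0 (t : ℝ) : EuclideanSpace ℝ (Fin 2) :=
  F1 t + ‖deriv F1 t‖⁻¹ • deriv F1 t

/-- The unibike error: the infimum over `s ≥ 2π` of `‖F₀(t) − F₁(s)‖`. -/
noncomputable def E1 (t : ℝ) : ℝ :=
  sInf {d : ℝ | ∃ s : ℝ, 2 * π ≤ s ∧ d = ‖F0 t - F1 s‖}

/-- `β(t) = arctan(2t/(1 + √(t/(2π))·√(1+4t²)))`. -/
noncomputable def β (t : ℝ) : ℝ :=
  Real.arctan (2 * t / (1 + Real.sqrt (t / (2 * π)) * Real.sqrt (1 + 4 * t ^ 2)))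

/-- `α(t) = t + 2π + β(t)`. -/
noncomputable def α (t : ℝ) : ℝ := t + 2 * π + β t

/-- `R₁(s) = √(s/(2π))`. -/
noncomputable def R1 (s : ℝ) : ℝ := Real.sqrt (s / (2 * π))

lemma norm_rot (A B u : ℝ) (x : EuclideanSpace ℝ (Fin 2))
    (hxv : x = !₂[A * Real.cos u - B * Real.sin u, A * Real.sin u + B * Real.cos u]) :
    ‖x‖ = Real.sqrt (A^2 + B^2) := by
  subst hxv
  rw [EuclideanSpace.norm_eq]
  congr 1
  rw [Fin.sum_univ_two]
  simp only [PiLp.toLp_apply, Matrix.cons_val_zero, Matrix.cons_val_one, Matrix.head_cons, Real.norm_eq_abs,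
    sq_abs]
  nlinarith [Real.sin_sq_add_cos_sq u]

set_option maxHeartbeats 1000000

/-- The unibike error of the polar square root spiral satisfies
`E₁(t) ≤ ‖F₀(t)‖ − R₁(α(t))` for all `t ≥ 2π`. -/
theorem unibike_error_le (t : ℝ) (ht : 2 * π ≤ t) :
    E1 t ≤ ‖F0 t‖ - R1 (α t) := by
  have hπ := Real.pi_pos
  have ht0 : 0 < t := lt_of_lt_of_le (by positivity) ht
  -- derivative of F1 at t
  have h0 : t / (2*π) ≠ 0 := by positivity
  have hrD : HasDerivAt (fun s : ℝ => Real.sqrt (s/(2*π))) ((1/(2*π))/(2*Real.sqrt (t/(2*π)))) t := by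
    have := (HasDerivAt.sqrt ((hasDerivAt_id t).div_const (2*π)) h0)
    simpa [one_div, mul_comm, mul_assoc, mul_left_comm] using this
  have h1 : HasDerivAt (fun s : ℝ => Real.sqrt (s/(2*π)) * Real.cos s)
      ((1/(2*π))/(2*Real.sqrt (t/(2*π))) * Real.cos t - Real.sqrt (t/(2*π)) * Real.sin t) t := by
    exact (hrD.mul (Real.hasDerivAt_cos t)).congr_deriv (by ring)
  have h2 : HasDerivAt (fun s : ℝ => Real.sqrt (s/(2*π)) * Real.sin s)
      ((1/(2*π))/(2*Real.sqrt (t/(2*π))) * Real.sin t + Real.sqrt (t/(2*π)) * Real.cos t) t := by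
    exact (hrD.mul (Real.hasDerivAt_sin t)).congr_deriv (by ring)
  have hderiv : HasDerivAt F1
      (!₂[(1/(2*π))/(2*Real.sqrt (t/(2*π))) * Real.cos t - Real.sqrt (t/(2*π)) * Real.sin t,
        (1/(2*π))/(2*Real.sqrt (t/(2*π))) * Real.sin t + Real.sqrt (t/(2*π)) * Real.cos t]) t := by
    have hpi : HasDerivAt (fun s : ℝ => (![Real.sqrt (s/(2*π)) * Real.cos s,
        Real.sqrt (s/(2*π)) * Real.sin s] : Fin 2 → ℝ))
        (![(1/(2*π))/(2*Real.sqrt (t/(2*π))) * Real.cos t - Real.sqrt (t/(2*π)) * Real.sin t,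
          (1/(2*π))/(2*Real.sqrt (t/(2*π))) * Real.sin t + Real.sqrt (t/(2*π)) * Real.cos t]) t := by
      rw [hasDerivAt_pi]
      intro i
      fin_cases i
      · simpa using h1
      · simpa using h2
    exact ((EuclideanSpace.equiv (Fin 2) ℝ).symm.toContinuousLinearMap.hasFDerivAt).comp_hasDerivAt t hpi
  have hv : deriv F1 t
      = !₂[(1/(2*π))/(2*Real.sqrt (t/(2*π))) * Real.cos t - Real.sqrt (t/(2*π)) * Real.sin t,
        (1/(2*π))/(2*Real.sqrt (t/(2*π))) * Real.sin t + Real.sqrt (t/(2*π)) * Real.cos t] :=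
    hderiv.deriv
  -- abbreviations
  set r := Real.sqrt (t / (2*π)) with hr_def
  have hr0 : 0 < r := Real.sqrt_pos.mpr (by positivity)
  have hr2 : r^2 = t/(2*π) := Real.sq_sqrt (by positivity)
  set d := (1/(2*π))/(2*r) with hd_def
  have hd0 : 0 < d := by positivity
  have hteq : t = 2*π*r^2 := by rw [hr2]; field_simp
  have h2td : 2*t*d = r := by
    rw [hd_def, hteq]; field_simp
  have h2rd : 2*r*d = 1/(2*π) := by rw [hd_def]; field_simp
  -- norm of the derivative
  have hvn : ‖deriv F1 t‖ = Real.sqrt (d^2 + r^2) := norm_rot d r t _ hv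
  set N := Real.sqrt (d^2 + r^2) with hN_def
  have hN2 : N^2 = d^2 + r^2 := Real.sq_sqrt (by positivity)
  have hN0 : 0 < N := Real.sqrt_pos.mpr (by positivity)
  -- F0 in closed form
  have hF0 : F0 t = !₂[(r + d/N) * Real.cos t - (r/N) * Real.sin t,
      (r + d/N) * Real.sin t + (r/N) * Real.cos t] := by
    rw [show F0 t = F1 t + ‖deriv F1 t‖⁻¹ • deriv F1 t from rfl, hvn, hv]
    ext i
    fin_cases i <;>
    · simp only [F1, PiLp.add_apply, PiLp.smul_apply, PiLp.toLp_apply, smul_eq_mul, Fin.zero_eta, Fin.isValue, Fin.mk_one, Matrix.cons_val_zero,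
        Matrix.cons_val_one, Matrix.head_cons, ← hr_def, ← hN_def]
      field_simp
      ring
  set S := ‖F0 t‖ with hS_def
  have hSval : S = Real.sqrt ((r + d/N)^2 + (r/N)^2) := norm_rot (r + d/N) (r/N) t _ hF0
  have hS2 : S^2 = (r + d/N)^2 + (r/N)^2 := by rw [hSval]; exact Real.sq_sqrt (by positivity)
  have hS0 : 0 < S := by rw [hSval]; exact Real.sqrt_pos.mpr (by positivity)
  have hA0 : 0 < r + d/N := by positivity
  -- the key algebraic identity for β
  have hQsq : (r * Real.sqrt (1 + 4*t^2))^2 = (2*t*N)^2 := by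
    rw [mul_pow, mul_pow, Real.sq_sqrt (by positivity : (0:ℝ) ≤ 1 + 4*t^2), hN2]
    nlinarith [h2td, hr2]
  have hQ : r * Real.sqrt (1 + 4*t^2) = 2*t*N := by
    calc r * Real.sqrt (1 + 4*t^2) = Real.sqrt ((r * Real.sqrt (1 + 4*t^2))^2) :=
          (Real.sqrt_sq (by positivity)).symm
      _ = Real.sqrt ((2*t*N)^2) := by rw [hQsq]
      _ = 2*t*N := Real.sqrt_sq (by positivity)
  have hden0 : 0 < 1 + r * Real.sqrt (1 + 4*t^2) := by positivity
  have hx : 2*t / (1 + r * Real.sqrt (1 + 4*t^2)) = (r/N) / (r + d/N) := by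
    rw [div_eq_div_iff hden0.ne' hA0.ne']
    field_simp
    linear_combination (-r) * hQ + h2td - r^2 * (congrArg Real.sqrt (show (1:ℝ) + t^2*4 = 1 + 4*t^2 by ring))
  have hβ : β t = Real.arctan (2*t / (1 + r * Real.sqrt (1 + 4*t^2))) := by
    rw [β, ← hr_def]
  have hβ0 : 0 ≤ β t := by
    rw [hβ, ← Real.arctan_zero]
    exact Real.arctan_strictMono.monotone (by positivity)
  -- cosine and sine of β
  have hsqrtone : Real.sqrt (1 + ((r/N)/(r + d/N))^2) = S / (r + d/N) := by
    have honex : 1 + ((r/N)/(r + d/N))^2 = S^2/(r + d/N)^2 := by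
      rw [hS2]; field_simp
    rw [honex, Real.sqrt_div (sq_nonneg S), Real.sqrt_sq hS0.le, Real.sqrt_sq hA0.le]
  have hcosβ : Real.cos (β t) = (r + d/N) / S := by
    rw [hβ, Real.cos_arctan, hx, hsqrtone, one_div_div]
  have hsinβ : Real.sin (β t) = (r/N) / S := by
    rw [hβ, Real.sin_arctan, hx, hsqrtone]
    rw [div_div_div_cancel_right₀]
    exact hA0.ne'
  -- trig of α
  have hαeq : α t = (t + β t) + 2*π := by rw [α]; ring
  have hcosα : Real.cos (α t) = Real.cos t * ((r + d/N)/S) - Real.sin t * ((r/N)/S) := by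
    rw [hαeq, Real.cos_add_two_pi, Real.cos_add, hcosβ, hsinβ]
  have hsinα : Real.sin (α t) = Real.sin t * ((r + d/N)/S) + Real.cos t * ((r/N)/S) := by
    rw [hαeq, Real.sin_add_two_pi, Real.sin_add, hcosβ, hsinβ]
  -- F1 (α t) is a positive multiple of F0 t
  have hα0 : (0:ℝ) ≤ α t := by rw [α]; linarith
  have hR0 : 0 ≤ R1 (α t) := Real.sqrt_nonneg _
  have hF1α : F1 (α t) = (R1 (α t) / S) • F0 t := by
    rw [hF0]
    ext i
    fin_cases i <;>
    · simp only [F1, R1, PiLp.smul_apply, PiLp.toLp_apply, smul_eq_mul, Fin.zero_eta, Fin.isValue, Fin.mk_one, Matrix.cons_val_zero, Matrix.cons_val_one,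
        Matrix.head_cons, hcosα, hsinα]
      field_simp
  -- R1 (α t) ≤ S
  have hβle : β t ≤ 1/N := by
    have harc : β t ≤ 2*t / (1 + r * Real.sqrt (1 + 4*t^2)) := by
      rw [hβ]
      have h := Real.le_tan (x := Real.arctan (2*t / (1 + r * Real.sqrt (1 + 4*t^2))))
        (by rw [← Real.arctan_zero]; exact Real.arctan_strictMono.monotone (by positivity))
        (Real.arctan_lt_pi_div_two _)
      rwa [Real.tan_arctan] at h
    have hle : 2*t / (1 + r * Real.sqrt (1 + 4*t^2)) ≤ 1/N := by
      rw [div_le_div_iff₀ hden0 hN0, hQ]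
      linarith [mul_pos (mul_pos two_pos ht0) hN0]
    linarith
  have hR1sq : R1 (α t)^2 = t/(2*π) + 1 + β t/(2*π) := by
    rw [R1, Real.sq_sqrt (by positivity), α]
    field_simp
  have hS2' : S^2 = t/(2*π) + 1 + (2*r*d)/N := by
    rw [hS2]
    have hNne : N ≠ 0 := hN0.ne'
    have hexp : (r + d/N)^2 + (r/N)^2 = r^2 + 2*r*d/N + (d^2+r^2)/N^2 := by ring
    rw [hexp, ← hN2, div_self (pow_ne_zero 2 hNne), hr2]; ring
  have hRleS : R1 (α t) ≤ S := by
    have hsq : R1 (α t)^2 ≤ S^2 := by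
      rw [hR1sq, hS2', h2rd]
      have hc : β t/(2*π) ≤ (1/(2*π))/N := by
        calc β t/(2*π) ≤ (1/N)/(2*π) := by gcongr
          _ = (1/(2*π))/N := by ring
      linarith
    calc R1 (α t) = Real.sqrt (R1 (α t)^2) := (Real.sqrt_sq hR0).symm
      _ ≤ Real.sqrt (S^2) := Real.sqrt_le_sqrt hsq
      _ = S := Real.sqrt_sq hS0.le
  -- conclude
  have hnorm : ‖F0 t - F1 (α t)‖ = S - R1 (α t) := by
    rw [hF1α, show F0 t - (R1 (α t)/S) • F0 t = (1 - R1 (α t)/S) • F0 t by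
      rw [sub_smul, one_smul], norm_smul, Real.norm_eq_abs,
      abs_of_nonneg (by rw [sub_nonneg, div_le_one hS0]; exact hRleS), ← hS_def]
    field_simp
  have hαge : 2*π ≤ α t := by rw [α]; linarith
  have hmem : ‖F0 t - F1 (α t)‖ ∈ {d : ℝ | ∃ s : ℝ, 2 * π ≤ s ∧ d = ‖F0 t - F1 s‖} :=
    ⟨α t, hαge, rfl⟩
  have hbdd : BddBelow {d : ℝ | ∃ s : ℝ, 2 * π ≤ s ∧ d = ‖F0 t - F1 s‖} :=
    ⟨0, fun y hy => by obtain ⟨s, _, rfl⟩ := hy; exact norm_nonneg _⟩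
  have hE : E1 t ≤ ‖F0 t - F1 (α t)‖ := csInf_le hbdd hmem
  rw [hnorm] at hE
  exact hE
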